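/- Let f : ℝ → ℝ be the quantized function f(x) = Σ_{i=0}^{n} a_i·1_{[b_i, b_{i+1})}(x) with real values a_0, …, a_n and breakpoints −∞ = b_0 < b_1 < … < b_n < b_{n+1} = +∞. Then for every σ > 0, the Gaussian smoothing f_σ is differentiable everywhere and f_σ′(x) = (1/σ)·Σ_{i=1}^{n} (a_i − a_{i−1})·p((b_i − x)/σ) for all x ∈ ℝ, where p is the standard normal density. -/

import Mathlib

open MeasureTheory ProbabilityTheory Real Set

/-- The Gaussian smoothing `L_σ(θ) = E_{ε ~ N(0,σ²)}[L (θ + ε)]` of a loss `L`. -/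
noncomputable def gaussianSmoothing (L : ℝ → ℝ) (σ θ : ℝ) : ℝ :=
  ∫ ε, L (θ + ε) ∂(gaussianReal 0 ⟨σ ^ 2, sq_nonneg σ⟩)

/-- The standard normal density `p(t) = (1/√(2π)) · exp(−t²/2)`. -/
noncomputable def stdGaussianPDF (t : ℝ) : ℝ :=
  (Real.sqrt (2 * Real.pi))⁻¹ * Real.exp (-t ^ 2 / 2)

-- telescoping helper
lemma tele_aux (A : ℕ → ℝ) (n k : ℕ) (hk : k < n) :
    ∑ j ∈ Finset.range n, (if j ≤ k then A (j + 1) - A j else 0) = A (k + 1) - A 0 := by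
  rw [← Finset.sum_filter]
  have hfil : (Finset.range n).filter (fun j => j ≤ k) = Finset.range (k + 1) := by
    ext j; simp [Nat.lt_succ_iff]; omega
  rw [hfil, Finset.sum_range_sub]

-- continuity of gaussian pdf
lemma cont_pdf (v : NNReal) : Continuous (gaussianPDFReal 0 v) := by
  unfold gaussianPDFReal; fun_prop

-- derivative of CDF
lemma hasDerivAt_cdf (v : NNReal) (y : ℝ) :
    HasDerivAt (fun y : ℝ => ∫ t in Iic y, gaussianPDFReal 0 v t) (gaussianPDFReal 0 v y) y := by
  have hint := integrable_gaussianPDFReal 0 v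
  have hfe : (fun y : ℝ => ∫ t in Iic y, gaussianPDFReal 0 v t)
      = fun y : ℝ => (∫ t in Iic (0:ℝ), gaussianPDFReal 0 v t)
        + ∫ t in (0:ℝ)..y, gaussianPDFReal 0 v t := by
    funext y
    have := intervalIntegral.integral_Iic_sub_Iic (hint.integrableOn) (hint.integrableOn)
      (a := 0) (b := y)
    linarith
  rw [hfe]
  exact (intervalIntegral.integral_hasDerivAt_right hint.intervalIntegrable
    ((cont_pdf v).stronglyMeasurable.stronglyMeasurableAtFilter)
    (cont_pdf v).continuousAt).const_add _

-- measure of Ici as total minus CDF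
lemma measure_Ici_toReal (v : NNReal) (hv : v ≠ 0) (y : ℝ) :
    ((gaussianReal 0 v) (Ici y)).toReal
      = (∫ t, gaussianPDFReal 0 v t) - ∫ t in Iic y, gaussianPDFReal 0 v t := by
  have hint := integrable_gaussianPDFReal 0 v
  rw [gaussianReal_apply_eq_integral 0 hv, ENNReal.toReal_ofReal
    (setIntegral_nonneg measurableSet_Ici fun t _ => gaussianPDFReal_nonneg 0 v t)]
  have h := intervalIntegral.integral_Iio_add_Ici (b := y) hint.integrableOn hint.integrableOn
  rw [integral_Iic_eq_integral_Iio]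
  linarith

lemma hasDerivAt_G (v : NNReal) (hv : v ≠ 0) (c x : ℝ) :
    HasDerivAt (fun t : ℝ => ((gaussianReal 0 v) (Ici (c - t))).toReal)
      (gaussianPDFReal 0 v (c - x)) x := by
  have hfe : (fun t : ℝ => ((gaussianReal 0 v) (Ici (c - t))).toReal)
      = fun t : ℝ => (∫ s, gaussianPDFReal 0 v s) - ∫ s in Iic (c - t), gaussianPDFReal 0 v s := by
    funext t; exact measure_Ici_toReal v hv _
  rw [hfe]
  have h1 : HasDerivAt (fun t : ℝ => c - t) (-1) x := (hasDerivAt_id x).const_sub c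
  have h2 := (hasDerivAt_cdf v (c - x)).comp x h1
  have h3 := h2.const_sub (∫ s, gaussianPDFReal 0 v s)
  have : -(gaussianPDFReal 0 v (c - x) * -1) = gaussianPDFReal 0 v (c - x) := by ring
  rwa [this] at h3

-- pdf in terms of stdGaussianPDF
lemma pdf_eq (σ : ℝ) (hσ : 0 < σ) (y : ℝ) :
    gaussianPDFReal 0 (⟨σ ^ 2, sq_nonneg σ⟩ : NNReal) y = (1 / σ) * stdGaussianPDF (y / σ) := by
  unfold gaussianPDFReal stdGaussianPDF
  dsimp only [NNReal.toReal]
  have h1 : Real.sqrt (2 * π * σ ^ 2) = Real.sqrt (2 * π) * σ := by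
    rw [Real.sqrt_mul (by positivity), Real.sqrt_sq hσ.le]
  have h2 : -(y - 0) ^ 2 / (2 * σ ^ 2) = -(y / σ) ^ 2 / 2 := by
    rw [sub_zero, div_pow, neg_div, neg_div, mul_comm 2 (σ^2), div_div]
  rw [h1, h2, mul_inv]
  ring

lemma f_eq_indicator (n : ℕ) (a : Fin (n + 1) → ℝ) (b : Fin n → ℝ) (hb : StrictMono b)
    (f : ℝ → ℝ)
    (hf_first : ∀ x : ℝ, (∀ i : Fin n, x < b i) → f x = a 0)
    (hf_piece : ∀ (i : Fin n) (x : ℝ), b i ≤ x → (∀ j : Fin n, i < j → x < b j) →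
      f x = a i.succ) (x : ℝ) :
    f x = a 0 + ∑ i : Fin n, (a i.succ - a i.castSucc) * (Ici (b i)).indicator 1 x := by
  by_cases hx : ∀ i : Fin n, x < b i
  · rw [hf_first x hx]
    have h0 : ∀ i : Fin n, (Ici (b i)).indicator (1 : ℝ → ℝ) x = 0 := fun i =>
      Set.indicator_of_notMem (by simpa using (hx i)) _
    simp [h0]
  · push_neg at hx
    obtain ⟨i0, hi0⟩ := hx
    set S := Finset.univ.filter (fun i : Fin n => b i ≤ x) with hS
    have hSne : S.Nonempty := ⟨i0, by simp [hS, hi0]⟩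
    set k := S.max' hSne with hk
    have hkS : k ∈ S := S.max'_mem hSne
    have hbk : b k ≤ x := by
      have := hkS; rw [hS, Finset.mem_filter] at this; exact this.2
    have hgt : ∀ j : Fin n, k < j → x < b j := by
      intro j hj
      by_contra h
      push_neg at h
      have hjS : j ∈ S := by rw [hS, Finset.mem_filter]; exact ⟨Finset.mem_univ j, h⟩
      exact absurd (S.le_max' j hjS) (not_le.2 hj)
    rw [hf_piece k x hbk hgt]
    have hind : ∀ i : Fin n, (a i.succ - a i.castSucc) * (Ici (b i)).indicator (1:ℝ→ℝ) x
        = if i ≤ k then a i.succ - a i.castSucc else 0 := by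
      intro i
      by_cases h : i ≤ k
      · have hbi : b i ≤ x := le_trans (hb.monotone h) hbk
        rw [Set.indicator_of_mem (show x ∈ Ici (b i) from hbi) (1:ℝ→ℝ), if_pos h]; simp
      · have hxb : x < b i := hgt i (lt_of_not_ge h)
        rw [Set.indicator_of_notMem (show x ∉ Ici (b i) by simpa using hxb) (1:ℝ→ℝ), if_neg h]; simp
    rw [Finset.sum_congr rfl (fun i _ => hind i)]
    set A : ℕ → ℝ := fun m => a ⟨min m n, by omega⟩ with hA
    have hA1 : ∀ i : Fin n, A ((i : ℕ) + 1) = a i.succ := by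
      intro i
      apply congrArg a
      apply Fin.ext
      simp [hA, Nat.min_eq_left (Nat.succ_le_of_lt i.isLt)]
    have hA0 : ∀ i : Fin n, A (i : ℕ) = a i.castSucc := by
      intro i
      apply congrArg a
      apply Fin.ext
      simp [hA, Nat.min_eq_left (le_of_lt i.isLt)]
    have hsum : ∑ i : Fin n, (if i ≤ k then a i.succ - a i.castSucc else 0)
        = ∑ m ∈ Finset.range n, (if m ≤ (k : ℕ) then A (m + 1) - A m else 0) := by
      rw [Finset.sum_range fun m => if m ≤ (k : ℕ) then A (m + 1) - A m else 0]
      apply Finset.sum_congr rfl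
      intro i _
      rw [hA1 i, hA0 i]
      exact if_congr (by exact Iff.rfl) rfl rfl
    rw [hsum, tele_aux A n (k : ℕ) k.isLt, hA1 k]
    have hA00 : A 0 = a 0 := by
      apply congrArg a; apply Fin.ext; simp [hA]
    rw [hA00]
    ring


/-- Let `f` be the quantized function taking value `a 0` on `(−∞, b 0)`
and value `a i.succ` on `[b i, b (i+1))` for each interior breakpoint `b i` (with the last
interval unbounded), where the breakpoints `b : Fin n → ℝ` are strictly increasing.
Then for every `σ > 0` the Gaussian smoothing `f_σ` is differentiable everywhere with
`f_σ′(x) = (1/σ) · Σ_{i=1}^{n} (a_i − a_{i−1}) · p((b_i − x)/σ)`. -/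
theorem quantized_gaussian_smoothing_deriv
    (n : ℕ) (a : Fin (n + 1) → ℝ) (b : Fin n → ℝ) (hb : StrictMono b)
    (f : ℝ → ℝ)
    (hf_first : ∀ x : ℝ, (∀ i : Fin n, x < b i) → f x = a 0)
    (hf_piece : ∀ (i : Fin n) (x : ℝ), b i ≤ x → (∀ j : Fin n, i < j → x < b j) →
      f x = a i.succ) :
    ∀ σ : ℝ, 0 < σ → ∀ x : ℝ,
      HasDerivAt (fun t : ℝ => gaussianSmoothing f σ t)
        ((1 / σ) * ∑ i : Fin n,
          (a i.succ - a i.castSucc) * stdGaussianPDF ((b i - x) / σ)) x := by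
  intro σ hσ x
  set v : NNReal := ⟨σ ^ 2, sq_nonneg σ⟩ with hvdef
  have hv : v ≠ 0 := by
    intro h
    have h2 : σ ^ 2 = 0 := congrArg NNReal.toReal h
    nlinarith
  have hsm : ∀ t : ℝ, gaussianSmoothing f σ t
      = a 0 + ∑ i : Fin n, (a i.succ - a i.castSucc)
          * ((gaussianReal 0 v) (Ici (b i - t))).toReal := by
    intro t
    unfold gaussianSmoothing
    have hfe : ∀ ε : ℝ, f (t + ε)
        = a 0 + ∑ i : Fin n, (a i.succ - a i.castSucc) * (Ici (b i - t)).indicator 1 ε := by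
      intro ε
      rw [f_eq_indicator n a b hb f hf_first hf_piece (t + ε)]
      congr 1
      apply Finset.sum_congr rfl
      intro i _
      congr 1
      simp only [Set.indicator_apply, mem_Ici]
      exact if_congr (by constructor <;> intro <;> linarith) rfl rfl
    have hint : ∀ i : Fin n, Integrable
        (fun ε : ℝ => (a i.succ - a i.castSucc) * (Ici (b i - t)).indicator 1 ε)
        (gaussianReal 0 v) :=
      fun i => (((integrable_const (1 : ℝ)).indicator measurableSet_Ici)).const_mul _
    simp only [hfe]
    rw [integral_add (integrable_const _) (integrable_finset_sum _ (fun i _ => hint i)),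
      integral_const, integral_finset_sum _ (fun i _ => hint i)]
    simp only [probReal_univ, measure_univ, ENNReal.toReal_one, one_smul]
    congr 1
    apply Finset.sum_congr rfl
    intro i _
    rw [integral_const_mul, integral_indicator_one measurableSet_Ici, measureReal_def]
  have hfun : (fun t : ℝ => gaussianSmoothing f σ t)
      = fun t : ℝ => a 0 + ∑ i : Fin n, (a i.succ - a i.castSucc)
          * ((gaussianReal 0 v) (Ici (b i - t))).toReal := funext hsm
  rw [hfun]
  have hder := HasDerivAt.const_add (a 0)
    (HasDerivAt.fun_sum (u := Finset.univ)
      (fun i _ => ((hasDerivAt_G v hv (b i) x).const_mul (a i.succ - a i.castSucc))))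
  convert hder using 1
  case e'_4 => rfl
  case e'_5 => rfl
  rw [Finset.mul_sum]
  apply Finset.sum_congr rfl
  intro i _
  rw [pdf_eq σ hσ]
  ring
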